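/- arXiv:2603.08118 — 6 statements merged into one kernel-verified Lean document; each statement's English description precedes it below -/
import Mathlib

section
/- Let S be a measurable space, let P be a probability measure on S, let f : S → ℝ and c : S × S → ℝ be bounded measurable functions with c ≥ 0, and let λ ≥ 0. Then the infimum, over all probability measures P̂ on S, of [ ∫ f dP̂ + λ · ( inf over couplings γ of P and P̂ of ∫ c dγ ) ] equals the infimum, over all probability measures γ on S × S whose first marginal is P, of ∫ ( f(ŝ) + λ·c(s, ŝ) ) dγ(s, ŝ). -/
open MeasureTheory

lemma aux_integrable {α : Type*} [MeasurableSpace α] (μ : Measure α) [IsFiniteMeasure μ]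
    {g : α → ℝ} (hg : Measurable g) {C : ℝ} (h : ∀ x, |g x| ≤ C) : Integrable g μ :=
  ⟨hg.aestronglyMeasurable, HasFiniteIntegral.of_bounded (C := C)
    (Filter.Eventually.of_forall fun x => by simpa [Real.norm_eq_abs] using h x)⟩

lemma aux_lb {α : Type*} [MeasurableSpace α] (μ : Measure α) [IsProbabilityMeasure μ]
    {g : α → ℝ} {C : ℝ} (h : ∀ x, |g x| ≤ C) : -C ≤ ∫ x, g x ∂μ := by
  have h1 : ‖∫ x, g x ∂μ‖ ≤ C * (μ Set.univ).toReal :=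
    norm_integral_le_of_norm_le_const (Filter.Eventually.of_forall fun x => by
      simpa [Real.norm_eq_abs] using h x)
  simp [measure_univ] at h1
  have := abs_le.mp (by simpa [Real.norm_eq_abs] using h1)
  linarith [this.1]

/-- Duality between the penalized minimization over probability measures (with the
optimal-transport cost given by an infimum over couplings) and the minimization over
probability measures on the product space whose first marginal is `P`. -/
theorem penalized_inf_eq_inf_over_first_marginal
    {S : Type*} [MeasurableSpace S] (P : Measure S) [IsProbabilityMeasure P]
    (f : S → ℝ) (c : S × S → ℝ)
    (hf_meas : Measurable f) (hf_bdd : ∃ C : ℝ, ∀ x, |f x| ≤ C)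
    (hc_meas : Measurable c) (hc_bdd : ∃ C : ℝ, ∀ p, |c p| ≤ C)
    (hc_nonneg : ∀ p, 0 ≤ c p)
    (lam : ℝ) (hlam : 0 ≤ lam) :
    sInf { v : ℝ | ∃ Phat : Measure S, IsProbabilityMeasure Phat ∧
        v = (∫ x, f x ∂Phat) + lam *
          sInf { w : ℝ | ∃ γ : Measure (S × S), IsProbabilityMeasure γ ∧
            γ.map Prod.fst = P ∧ γ.map Prod.snd = Phat ∧ w = ∫ p, c p ∂γ } } =
      sInf { v : ℝ | ∃ γ : Measure (S × S), IsProbabilityMeasure γ ∧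
        γ.map Prod.fst = P ∧ v = ∫ p, (f p.2 + lam * c p) ∂γ } := by
  classical
  obtain ⟨Cf, hCf⟩ := hf_bdd
  obtain ⟨Cc, hCc⟩ := hc_bdd
  set A := { v : ℝ | ∃ Phat : Measure S, IsProbabilityMeasure Phat ∧
        v = (∫ x, f x ∂Phat) + lam *
          sInf { w : ℝ | ∃ γ : Measure (S × S), IsProbabilityMeasure γ ∧
            γ.map Prod.fst = P ∧ γ.map Prod.snd = Phat ∧ w = ∫ p, c p ∂γ } } with hA
  set B := { v : ℝ | ∃ γ : Measure (S × S), IsProbabilityMeasure γ ∧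
        γ.map Prod.fst = P ∧ v = ∫ p, (f p.2 + lam * c p) ∂γ } with hB
  -- integrability facts
  have hfsnd_meas : Measurable (fun p : S × S => f p.2) := hf_meas.comp measurable_snd
  have hfsnd_bdd : ∀ p : S × S, |f p.2| ≤ Cf := fun p => hCf p.2
  have split : ∀ (γ : Measure (S × S)), IsProbabilityMeasure γ →
      ∫ p, (f p.2 + lam * c p) ∂γ = (∫ x, f x ∂(γ.map Prod.snd)) + lam * ∫ p, c p ∂γ := by
    intro γ hγ
    rw [integral_map measurable_snd.aemeasurable hf_meas.aestronglyMeasurable,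
      integral_add (aux_integrable γ hfsnd_meas hfsnd_bdd)
        ((aux_integrable γ hc_meas hCc).const_mul lam), integral_const_mul]
  -- lower bounds for B
  have hBlb : ∀ v ∈ B, -Cf ≤ v := by
    intro v hv
    obtain ⟨γ, hγ, -, rfl⟩ := hv
    have hmono : ∫ p, f p.2 ∂γ ≤ ∫ p, (f p.2 + lam * c p) ∂γ := by
      apply integral_mono (aux_integrable γ hfsnd_meas hfsnd_bdd)
        (Integrable.add (aux_integrable γ hfsnd_meas hfsnd_bdd)
          ((aux_integrable γ hc_meas hCc).const_mul lam))
      intro p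
      have := mul_nonneg hlam (hc_nonneg p)
      show f p.2 ≤ f p.2 + lam * c p
      linarith
    have := aux_lb (μ := γ) hfsnd_bdd
    linarith
  have hBbdd : BddBelow B := ⟨-Cf, fun v hv => hBlb v hv⟩
  -- coupling sets
  have hWnonempty : ∀ (Phat : Measure S), IsProbabilityMeasure Phat →
      ∃ w, w ∈ { w : ℝ | ∃ γ : Measure (S × S), IsProbabilityMeasure γ ∧
        γ.map Prod.fst = P ∧ γ.map Prod.snd = Phat ∧ w = ∫ p, c p ∂γ } := by
    intro Phat hPhat
    refine ⟨∫ p, c p ∂(P.prod Phat), P.prod Phat, inferInstance, ?_, ?_, rfl⟩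
    · simp [Measure.map_fst_prod, measure_univ]
    · simp [Measure.map_snd_prod, measure_univ]
  have hWnonneg : ∀ (Phat : Measure S) (w : ℝ),
      (∃ γ : Measure (S × S), IsProbabilityMeasure γ ∧
        γ.map Prod.fst = P ∧ γ.map Prod.snd = Phat ∧ w = ∫ p, c p ∂γ) → 0 ≤ w := by
    rintro Phat w ⟨γ, hγ, -, -, rfl⟩
    exact integral_nonneg hc_nonneg
  -- lower bounds for A
  have hAlb : ∀ v ∈ A, -Cf ≤ v := by
    rintro v ⟨Phat, hPhat, rfl⟩
    have h1 : 0 ≤ sInf { w : ℝ | ∃ γ : Measure (S × S), IsProbabilityMeasure γ ∧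
        γ.map Prod.fst = P ∧ γ.map Prod.snd = Phat ∧ w = ∫ p, c p ∂γ } :=
      Real.sInf_nonneg (fun w hw => hWnonneg Phat w hw)
    have h2 := aux_lb (μ := Phat) hCf
    nlinarith
  have hAbdd : BddBelow A := ⟨-Cf, fun v hv => hAlb v hv⟩
  apply le_antisymm
  · -- sInf A ≤ sInf B
    apply le_csInf
    · -- B nonempty via diagonal
      have hdiag : Measurable (fun x : S => (x, x)) := measurable_id.prodMk measurable_id
      refine ⟨_, P.map (fun x => (x, x)), Measure.isProbabilityMeasure_map hdiag.aemeasurable, ?_, rfl⟩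
      rw [Measure.map_map measurable_fst hdiag]
      simp [Function.comp_def]
    · rintro v ⟨γ, hγ, hfst, rfl⟩
      have hsnd : IsProbabilityMeasure (γ.map Prod.snd) :=
        Measure.isProbabilityMeasure_map measurable_snd.aemeasurable
      have hmem : (∫ x, f x ∂(γ.map Prod.snd)) + lam *
          sInf { w : ℝ | ∃ γ' : Measure (S × S), IsProbabilityMeasure γ' ∧
            γ'.map Prod.fst = P ∧ γ'.map Prod.snd = γ.map Prod.snd ∧ w = ∫ p, c p ∂γ' } ∈ A :=
        ⟨γ.map Prod.snd, hsnd, rfl⟩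
      refine le_trans (csInf_le hAbdd hmem) ?_
      rw [split γ hγ]
      have hle : sInf { w : ℝ | ∃ γ' : Measure (S × S), IsProbabilityMeasure γ' ∧
            γ'.map Prod.fst = P ∧ γ'.map Prod.snd = γ.map Prod.snd ∧ w = ∫ p, c p ∂γ' } ≤
          ∫ p, c p ∂γ :=
        csInf_le ⟨0, fun w hw => hWnonneg _ w hw⟩ ⟨γ, hγ, hfst, rfl, rfl⟩
      nlinarith
  · -- sInf B ≤ sInf A
    apply le_csInf
    · exact ⟨_, P, inferInstance, rfl⟩
    · rintro v ⟨Phat, hPhat, rfl⟩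
      set W := { w : ℝ | ∃ γ : Measure (S × S), IsProbabilityMeasure γ ∧
        γ.map Prod.fst = P ∧ γ.map Prod.snd = Phat ∧ w = ∫ p, c p ∂γ } with hW
      apply le_of_forall_pos_le_add
      intro ε hε
      have hδ : 0 < ε / (lam + 1) := div_pos hε (by linarith)
      obtain ⟨w, hwW, hwlt⟩ := Real.lt_sInf_add_pos (hWnonempty Phat hPhat) hδ
      obtain ⟨γ, hγ, hfst, hsnd, rfl⟩ := hwW
      have hmemB : ∫ p, (f p.2 + lam * c p) ∂γ ∈ B := ⟨γ, hγ, hfst, rfl⟩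
      refine le_trans (csInf_le hBbdd hmemB) ?_
      rw [split γ hγ, hsnd]
      have hlam1 : lam * (ε / (lam + 1)) ≤ ε := by
        rw [mul_div_assoc']
        rw [div_le_iff₀ (by linarith : (0:ℝ) < lam + 1)]
        nlinarith
      nlinarith [mul_le_mul_of_nonneg_left hwlt.le hlam]
end

section
/- Let P be a Borel probability measure on ℝⁿ, let V : ℝⁿ → ℝ be bounded and Borel measurable, and let ξ ≥ 0. Suppose there exists a Borel measurable map φ : ℝⁿ → ℝⁿ such that for all s, ‖φ(s) − s‖ ≤ ξ and V(φ(s)) = inf_{ŝ : ‖ŝ − s‖ ≤ ξ} V(ŝ). Then the infimum, over all Borel probability measures P̂ with W(P, P̂) ≤ ξ, of ∫ V dP̂ is at most ∫ [ inf_{ŝ : ‖ŝ − s‖ ≤ ξ} V(ŝ) ] dP(s). (One inequality of Proposition 1, the dual reformulation over the Wasserstein ball.) -/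
open MeasureTheory

/-! Transporting `P` along a selector `φ` that moves every point by at most `ξ` stays in the
`ξ`-Wasserstein ball, since the graph of `φ` is a coupling of cost at most `ξ`; and the integral
of `V` against the transported measure is `∫ V ∘ φ dP`, the right-hand side. -/

noncomputable def wassersteinDist {n : ℕ}
    (μ ν : Measure (EuclideanSpace ℝ (Fin n))) : ℝ :=
  sInf { c : ℝ | ∃ γ : Measure (EuclideanSpace ℝ (Fin n) × EuclideanSpace ℝ (Fin n)),
    IsProbabilityMeasure γ ∧ γ.map Prod.fst = μ ∧ γ.map Prod.snd = ν ∧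
    c = ∫ p, ‖p.1 - p.2‖ ∂γ }

section Wasserstein

variable {n : ℕ}

lemma wassersteinDist_le_integral_of_coupling {μ ν : Measure (EuclideanSpace ℝ (Fin n))}
    (γ : Measure (EuclideanSpace ℝ (Fin n) × EuclideanSpace ℝ (Fin n))) [IsProbabilityMeasure γ]
    (hfst : γ.map Prod.fst = μ) (hsnd : γ.map Prod.snd = ν) :
    wassersteinDist μ ν ≤ ∫ p, ‖p.1 - p.2‖ ∂γ := by
  refine csInf_le ⟨0, ?_⟩ ⟨γ, inferInstance, hfst, hsnd, rfl⟩
  rintro c ⟨γ', -, -, -, rfl⟩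
  exact integral_nonneg fun p => norm_nonneg _

lemma wassersteinDist_map_le (P : Measure (EuclideanSpace ℝ (Fin n))) [IsProbabilityMeasure P]
    {φ : EuclideanSpace ℝ (Fin n) → EuclideanSpace ℝ (Fin n)} (hφ : Measurable φ) {ξ : ℝ}
    (hφ_close : ∀ s, ‖φ s - s‖ ≤ ξ) :
    wassersteinDist P (P.map φ) ≤ ξ := by
  have hgraph : Measurable fun s => (s, φ s) := measurable_id.prodMk hφ
  have : IsProbabilityMeasure (P.map fun s => (s, φ s)) :=
    Measure.isProbabilityMeasure_map hgraph.aemeasurable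
  calc wassersteinDist P (P.map φ)
      ≤ ∫ p, ‖p.1 - p.2‖ ∂(P.map fun s => (s, φ s)) :=
        wassersteinDist_le_integral_of_coupling _
          (by rw [Measure.map_map measurable_fst hgraph]; exact Measure.map_id)
          (by rw [Measure.map_map measurable_snd hgraph]; rfl)
    _ = ∫ s, ‖s - φ s‖ ∂P :=
        integral_map hgraph.aemeasurable
          (measurable_fst.sub measurable_snd).norm.aestronglyMeasurable
    _ ≤ ξ := by
        have hbound := norm_integral_le_of_norm_le_const (μ := P) (C := ξ)
          (f := fun s => ‖s - φ s‖)
          (.of_forall fun s => by rw [norm_norm, norm_sub_rev]; exact hφ_close s)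
        simpa using (le_abs_self _).trans hbound

end Wasserstein

lemma neg_le_integral_of_abs_le {α : Type*} [MeasurableSpace α] {μ : Measure α}
    [IsProbabilityMeasure μ] {f : α → ℝ} {C : ℝ} (hf : ∀ x, |f x| ≤ C) :
    -C ≤ ∫ x, f x ∂μ := by
  have hbound := norm_integral_le_of_norm_le_const (μ := μ) (f := f) (.of_forall hf)
  simp only [Real.norm_eq_abs, probReal_univ, mul_one] at hbound
  exact (abs_le.mp hbound).1

theorem inf_over_wasserstein_ball_le_general {n : ℕ}
    (P : Measure (EuclideanSpace ℝ (Fin n))) [IsProbabilityMeasure P]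
    (V : EuclideanSpace ℝ (Fin n) → ℝ)
    (hV_meas : Measurable V) (hV_bdd : ∃ C : ℝ, ∀ x, |V x| ≤ C)
    (ξ : ℝ)
    (φ : EuclideanSpace ℝ (Fin n) → EuclideanSpace ℝ (Fin n))
    (hφ_meas : Measurable φ)
    (hφ_close : ∀ s, ‖φ s - s‖ ≤ ξ)
    (hφ_min : ∀ s, V (φ s) =
      ⨅ shat : {shat : EuclideanSpace ℝ (Fin n) // ‖shat - s‖ ≤ ξ}, V shat.1) :
    sInf { v : ℝ | ∃ Phat : Measure (EuclideanSpace ℝ (Fin n)),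
        IsProbabilityMeasure Phat ∧ wassersteinDist P Phat ≤ ξ ∧
        v = ∫ x, V x ∂Phat } ≤
      ∫ s, (⨅ shat : {shat : EuclideanSpace ℝ (Fin n) // ‖shat - s‖ ≤ ξ}, V shat.1) ∂P := by
  obtain ⟨C, hC⟩ := hV_bdd
  have hvalue : ∫ x, V x ∂(P.map φ) =
      ∫ s, (⨅ shat : {shat : EuclideanSpace ℝ (Fin n) // ‖shat - s‖ ≤ ξ}, V shat.1) ∂P := by
    rw [integral_map hφ_meas.aemeasurable hV_meas.aestronglyMeasurable]
    simp only [hφ_min]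
  have hbdd : BddBelow { v : ℝ | ∃ Phat : Measure (EuclideanSpace ℝ (Fin n)),
      IsProbabilityMeasure Phat ∧ wassersteinDist P Phat ≤ ξ ∧ v = ∫ x, V x ∂Phat } := by
    refine ⟨-C, ?_⟩
    rintro v ⟨Q, hQ, -, rfl⟩
    exact neg_le_integral_of_abs_le hC
  exact hvalue ▸ csInf_le hbdd ⟨P.map φ, Measure.isProbabilityMeasure_map hφ_meas.aemeasurable,
    wassersteinDist_map_le P hφ_meas hφ_close, rfl⟩

/-- One inequality of the dual reformulation over the Wasserstein ball (Proposition 1):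
if a measurable selector `φ` realizes pointwise the minimum of `V` over the radius-`ξ`
uncertainty set, then the infimum of `∫ V dPhat` over probability measures `Phat` with
`W(P, Phat) ≤ ξ` is at most `∫ (⨅ shat ∈ U_ξ(s), V shat) dP(s)`. -/
theorem inf_over_wasserstein_ball_le {n : ℕ}
    (P : Measure (EuclideanSpace ℝ (Fin n))) [IsProbabilityMeasure P]
    (V : EuclideanSpace ℝ (Fin n) → ℝ)
    (hV_meas : Measurable V) (hV_bdd : ∃ C : ℝ, ∀ x, |V x| ≤ C)
    (ξ : ℝ) (hξ : 0 ≤ ξ)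
    (φ : EuclideanSpace ℝ (Fin n) → EuclideanSpace ℝ (Fin n))
    (hφ_meas : Measurable φ)
    (hφ_close : ∀ s, ‖φ s - s‖ ≤ ξ)
    (hφ_min : ∀ s, V (φ s) =
      ⨅ shat : {shat : EuclideanSpace ℝ (Fin n) // ‖shat - s‖ ≤ ξ}, V shat.1) :
    sInf { v : ℝ | ∃ Phat : Measure (EuclideanSpace ℝ (Fin n)),
        IsProbabilityMeasure Phat ∧ wassersteinDist P Phat ≤ ξ ∧
        v = ∫ x, V x ∂Phat } ≤
      ∫ s, (⨅ shat : {shat : EuclideanSpace ℝ (Fin n) // ‖shat - s‖ ≤ ξ}, V shat.1) ∂P :=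
  inf_over_wasserstein_ball_le_general P V hV_meas hV_bdd ξ φ hφ_meas hφ_close hφ_min
end

section
/- Let X be a measurable space, r : X → ℝ bounded measurable, γ ∈ [0,1), and let κ and κ̂ be Markov kernels from X to X. Let Q_true and Q̂ be bounded measurable functions satisfying the Bellman fixed-point equations Q_true(x) = r(x) + γ ∫ Q_true dκ(x) and Q̂(x) = r(x) + γ ∫ Q̂ dκ̂(x) for all x. Suppose there are ε₁ ≥ 0, ε₂ ≥ 0 and a function m : X → ℝ such that for all x: | ∫ Q̂ dκ̂(x) − m(x) | ≤ ε₁, m(x) ≤ ∫ Q̂ dκ(x), and | ∫ Q̂ dκ(x) − m(x) | ≤ ε₂. Then for all x ∈ X: Q_true(x) − γ(ε₁ + ε₂)/(1 − γ) ≤ Q̂(x) ≤ Q_true(x) + γ·ε₁/(1 − γ). (Proposition 2, bounded Q-value.) -/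
open MeasureTheory ProbabilityTheory

/-- Proposition 2 (bounded Q-value).  If `Qtrue` and `Qhat` are bounded measurable
fixed points of the Bellman operators of the Markov kernels `κ` and `κhat`, and the
robust target `m` satisfies `|∫ Qhat dκhat(x) − m x| ≤ ε₁`, `m x ≤ ∫ Qhat dκ(x)` and
`|∫ Qhat dκ(x) − m x| ≤ ε₂` for all `x`, then
`Qtrue x − γ(ε₁ + ε₂)/(1 − γ) ≤ Qhat x ≤ Qtrue x + γ·ε₁/(1 − γ)`. -/
theorem bounded_Q_value {X : Type*} [MeasurableSpace X]
    (r : X → ℝ) (hr_meas : Measurable r) (hr_bdd : ∃ C : ℝ, ∀ x, |r x| ≤ C)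
    (γ : ℝ) (hγ0 : 0 ≤ γ) (hγ1 : γ < 1)
    (κ κhat : Kernel X X) [IsMarkovKernel κ] [IsMarkovKernel κhat]
    (Qtrue Qhat : X → ℝ)
    (hQt_meas : Measurable Qtrue) (hQt_bdd : ∃ C : ℝ, ∀ x, |Qtrue x| ≤ C)
    (hQh_meas : Measurable Qhat) (hQh_bdd : ∃ C : ℝ, ∀ x, |Qhat x| ≤ C)
    (hQt_fix : ∀ x, Qtrue x = r x + γ * ∫ y, Qtrue y ∂(κ x))
    (hQh_fix : ∀ x, Qhat x = r x + γ * ∫ y, Qhat y ∂(κhat x))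
    (ε₁ ε₂ : ℝ) (hε₁ : 0 ≤ ε₁) (hε₂ : 0 ≤ ε₂)
    (m : X → ℝ)
    (h1 : ∀ x, |(∫ y, Qhat y ∂(κhat x)) - m x| ≤ ε₁)
    (h2 : ∀ x, m x ≤ ∫ y, Qhat y ∂(κ x))
    (h3 : ∀ x, |(∫ y, Qhat y ∂(κ x)) - m x| ≤ ε₂) :
    ∀ x : X, Qtrue x - γ * (ε₁ + ε₂) / (1 - γ) ≤ Qhat x ∧
      Qhat x ≤ Qtrue x + γ * ε₁ / (1 - γ) := by
  intro x
  haveI : Nonempty X := ⟨x⟩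
  obtain ⟨Ct, hCt⟩ := hQt_bdd
  obtain ⟨Ch, hCh⟩ := hQh_bdd
  set D : X → ℝ := fun y => Qhat y - Qtrue y with hD
  have hγpos : 0 < 1 - γ := by linarith
  -- integrability facts
  have hint : ∀ (μ : Measure X) [IsProbabilityMeasure μ],
      Integrable Qtrue μ ∧ Integrable Qhat μ := by
    intro μ _
    constructor
    · exact (integrable_const Ct).mono' hQt_meas.aestronglyMeasurable
        (Filter.Eventually.of_forall fun y => by simpa using hCt y)
    · exact (integrable_const Ch).mono' hQh_meas.aestronglyMeasurable
        (Filter.Eventually.of_forall fun y => by simpa using hCh y)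
  have hDint : ∀ y, Integrable D (κ y) := fun y =>
    ((hint (κ y)).2).sub (hint (κ y)).1
  have hDbd : ∀ y, |D y| ≤ Ch + Ct := fun y =>
    (abs_sub (Qhat y) (Qtrue y)).trans (add_le_add (hCh y) (hCt y))
  have hbddAbove : BddAbove (Set.range D) :=
    ⟨Ch + Ct, by rintro _ ⟨y, rfl⟩; exact (le_abs_self _).trans (hDbd y)⟩
  have hbddAboveN : BddAbove (Set.range fun y => -D y) :=
    ⟨Ch + Ct, by rintro _ ⟨y, rfl⟩; exact (neg_le_abs _).trans (hDbd y)⟩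
  set M : ℝ := ⨆ y, D y with hM
  set L : ℝ := ⨆ y, -D y with hL
  -- recursion
  have hrec : ∀ y, D y = γ * ((∫ z, Qhat z ∂(κhat y)) - ∫ z, Qtrue z ∂(κ y)) := by
    intro y
    simp only [hD]
    rw [hQh_fix y, hQt_fix y]; ring
  have hintD : ∀ y, ∫ z, D z ∂(κ y) = (∫ z, Qhat z ∂(κ y)) - ∫ z, Qtrue z ∂(κ y) := by
    intro y
    exact integral_sub (hint (κ y)).2 (hint (κ y)).1
  have hDleM : ∀ y, ∫ z, D z ∂(κ y) ≤ M := by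
    intro y
    calc ∫ z, D z ∂(κ y) ≤ ∫ _z, M ∂(κ y) := by
          apply integral_mono (hDint y) (integrable_const M)
          intro z; exact le_ciSup hbddAbove z
      _ = M := by simp
  have hNDleL : ∀ y, ∫ z, -D z ∂(κ y) ≤ L := by
    intro y
    calc ∫ z, -D z ∂(κ y) ≤ ∫ _z, L ∂(κ y) := by
          apply integral_mono (hDint y).neg (integrable_const L)
          intro z; exact le_ciSup hbddAboveN z
      _ = L := by simp
  -- upper bound on M
  have hMle : M ≤ γ * ε₁ / (1 - γ) := by
    have hstep : ∀ y, D y ≤ γ * ε₁ + γ * M := by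
      intro y
      have h1' := abs_le.mp (h1 y)
      have : (∫ z, Qhat z ∂(κhat y)) ≤ (∫ z, Qhat z ∂(κ y)) + ε₁ := by
        have := h2 y; linarith [h1'.2]
      have hD' : D y ≤ γ * (ε₁ + ∫ z, D z ∂(κ y)) := by
        rw [hrec y]
        apply mul_le_mul_of_nonneg_left _ hγ0
        rw [hintD y]; linarith
      have := hDleM y
      nlinarith
    have : M ≤ γ * ε₁ + γ * M := ciSup_le hstep
    have h' : M * (1 - γ) ≤ γ * ε₁ := by nlinarith
    exact (le_div_iff₀ hγpos).mpr h'
  -- upper bound on L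
  have hLle : L ≤ γ * (ε₁ + ε₂) / (1 - γ) := by
    have hstep : ∀ y, -D y ≤ γ * (ε₁ + ε₂) + γ * L := by
      intro y
      have h1' := abs_le.mp (h1 y)
      have h3' := abs_le.mp (h3 y)
      have : (∫ z, Qhat z ∂(κ y)) - (ε₁ + ε₂) ≤ ∫ z, Qhat z ∂(κhat y) := by
        linarith [h1'.1, h3'.2]
      have hD' : -D y ≤ γ * ((ε₁ + ε₂) + ∫ z, -D z ∂(κ y)) := by
        rw [hrec y]
        rw [← mul_neg]
        apply mul_le_mul_of_nonneg_left _ hγ0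
        rw [integral_neg, hintD y]; linarith
      have := hNDleL y
      nlinarith
    have : L ≤ γ * (ε₁ + ε₂) + γ * L := ciSup_le hstep
    have h' : L * (1 - γ) ≤ γ * (ε₁ + ε₂) := by nlinarith
    exact (le_div_iff₀ hγpos).mpr h'
  constructor
  · have : -D x ≤ L := le_ciSup hbddAboveN x
    have := this.trans hLle
    simp only [hD] at this; linarith
  · have : D x ≤ M := le_ciSup hbddAbove x
    have := this.trans hMle
    simp only [hD] at this; linarith
end

section
/- Let X be a measurable space, r : X → ℝ bounded measurable, γ ∈ [0,1), and let κ and κ̂ be Markov kernels from X to X with Bellman operators T Q = r + γ ∫ Q dκ and T̂ Q = r + γ ∫ Q dκ̂. Fix ε₁ ≥ 0 and assume that for every bounded measurable Q : X → ℝ and every x ∈ X, ∫ Q dκ̂(x) ≤ ∫ Q dκ(x) + ε₁. Let Q̂⁰ = Q⁰ be any bounded measurable function, and define the iterates Q̂^{k+1} = T̂ Q̂^k and Q^{k+1} = T Q^k. Then for every k ≥ 0 and every x ∈ X: Q̂^k(x) ≤ Q^k(x) + γ·ε₁·(1 − γ^k)/(1 − γ). (The induction inequality in the proof of Proposition 2.)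 -/
open MeasureTheory ProbabilityTheory

private lemma integrable_of_bdd {X : Type*} [MeasurableSpace X] (μ : Measure X)
    [IsProbabilityMeasure μ] {Q : X → ℝ} (hQ : Measurable Q) {C : ℝ} (hC : ∀ x, |Q x| ≤ C) :
    Integrable Q μ := by
  refine Integrable.mono' (integrable_const C) hQ.aestronglyMeasurable ?_
  filter_upwards with x
  simpa [Real.norm_eq_abs] using hC x

/-- The induction inequality in the proof of Proposition 2: if the one-step expectations
under `κhat` dominate those under `κ` up to an additive error `ε₁` (for all bounded
measurable test functions), then the Bellman iterates started from a common bounded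
measurable `Q⁰` satisfy `Qhat^k ≤ Q^k + γ·ε₁·(1 − γ^k)/(1 − γ)` for every `k`. -/
theorem bellman_iterates_induction_bound {X : Type*} [MeasurableSpace X]
    (r : X → ℝ) (hr_meas : Measurable r) (hr_bdd : ∃ C : ℝ, ∀ x, |r x| ≤ C)
    (γ : ℝ) (hγ0 : 0 ≤ γ) (hγ1 : γ < 1)
    (κ κhat : Kernel X X) [IsMarkovKernel κ] [IsMarkovKernel κhat]
    (ε₁ : ℝ) (hε₁ : 0 ≤ ε₁)
    (hdom : ∀ Q : X → ℝ, Measurable Q → (∃ C : ℝ, ∀ x, |Q x| ≤ C) →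
      ∀ x, (∫ y, Q y ∂(κhat x)) ≤ (∫ y, Q y ∂(κ x)) + ε₁)
    (Qhat Q : ℕ → X → ℝ)
    (hQ0 : Qhat 0 = Q 0)
    (hQ0_meas : Measurable (Q 0)) (hQ0_bdd : ∃ C : ℝ, ∀ x, |Q 0 x| ≤ C)
    (hQhat_rec : ∀ k x, Qhat (k + 1) x = r x + γ * ∫ y, Qhat k y ∂(κhat x))
    (hQ_rec : ∀ k x, Q (k + 1) x = r x + γ * ∫ y, Q k y ∂(κ x)) :
    ∀ (k : ℕ) (x : X), Qhat k x ≤ Q k x + γ * ε₁ * (1 - γ ^ k) / (1 - γ) := by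
  obtain ⟨Cr, hCr⟩ := hr_bdd
  -- generic measurability/boundedness propagation through one Bellman step
  have step : ∀ (κ' : Kernel X X) [IsMarkovKernel κ'] (f : X → ℝ), Measurable f →
      (∃ C : ℝ, ∀ x, |f x| ≤ C) →
      (Measurable (fun x => r x + γ * ∫ y, f y ∂(κ' x)) ∧
        ∃ C : ℝ, ∀ x, |r x + γ * ∫ y, f y ∂(κ' x)| ≤ C) := by
    intro κ' hκ' f hf ⟨C, hC⟩
    haveI := hκ'
    have hmi : Measurable fun x => ∫ y, f y ∂(κ' x) := by
      have : StronglyMeasurable fun p : X × X => f p.2 :=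
        (hf.comp measurable_snd).stronglyMeasurable
      exact this.integral_kernel_prod_right'.measurable
    refine ⟨hr_meas.add (measurable_const.mul hmi), Cr + γ * C, fun x => ?_⟩
    have hint : |∫ y, f y ∂(κ' x)| ≤ C := by
      rw [← Real.norm_eq_abs]
      have h := norm_integral_le_of_norm_le_const (μ := κ' x) (f := f) (C := C)
        (Filter.Eventually.of_forall fun y => by simpa [Real.norm_eq_abs] using hC y)
      simpa [measure_univ] using h
    calc |r x + γ * ∫ y, f y ∂(κ' x)| ≤ |r x| + |γ * ∫ y, f y ∂(κ' x)| := abs_add_le _ _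
      _ ≤ Cr + γ * C := by
          rw [abs_mul, abs_of_nonneg hγ0]
          exact add_le_add (hCr x) (by nlinarith [abs_nonneg (∫ y, f y ∂(κ' x))])
  have hQmb : ∀ k, Measurable (Q k) ∧ ∃ C : ℝ, ∀ x, |Q k x| ≤ C := by
    intro k; induction k with
    | zero => exact ⟨hQ0_meas, hQ0_bdd⟩
    | succ n ih =>
        have := step κ (Q n) ih.1 ih.2
        constructor
        · have := this.1; simpa [← funext (hQ_rec n)] using this
        · obtain ⟨C, hC⟩ := this.2; exact ⟨C, fun x => by rw [hQ_rec n x]; exact hC x⟩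
  have hQhmb : ∀ k, Measurable (Qhat k) ∧ ∃ C : ℝ, ∀ x, |Qhat k x| ≤ C := by
    intro k; induction k with
    | zero => rw [hQ0]; exact ⟨hQ0_meas, hQ0_bdd⟩
    | succ n ih =>
        have := step κhat (Qhat n) ih.1 ih.2
        constructor
        · have := this.1; simpa [← funext (hQhat_rec n)] using this
        · obtain ⟨C, hC⟩ := this.2; exact ⟨C, fun x => by rw [hQhat_rec n x]; exact hC x⟩
  have h1γ : 0 < 1 - γ := by linarith
  intro k
  induction k with
  | zero => intro x; simp [hQ0]
  | succ n ih =>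
      intro x
      set c : ℝ := γ * ε₁ * (1 - γ ^ n) / (1 - γ) with hc
      have hcn : 0 ≤ c := by
        apply div_nonneg _ h1γ.le
        have : γ ^ n ≤ 1 := pow_le_one₀ hγ0 hγ1.le
        exact mul_nonneg (mul_nonneg hγ0 hε₁) (by linarith)
      obtain ⟨hQhm, CH, hCH⟩ := hQhmb n
      obtain ⟨hQm, CQ, hCQ⟩ := hQmb n
      have hint1 : Integrable (Qhat n) (κhat x) := integrable_of_bdd _ hQhm hCH
      have hint2 : Integrable (fun y => Q n y + c) (κhat x) :=
        (integrable_of_bdd _ hQm hCQ).add (integrable_const c)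
      have h1 : (∫ y, Qhat n y ∂(κhat x)) ≤ (∫ y, Q n y ∂(κhat x)) + c := by
        calc (∫ y, Qhat n y ∂(κhat x)) ≤ ∫ y, (Q n y + c) ∂(κhat x) :=
              integral_mono hint1 hint2 (fun y => ih y)
          _ = (∫ y, Q n y ∂(κhat x)) + c := by
              rw [integral_add (integrable_of_bdd _ hQm hCQ) (integrable_const c)]
              simp
      have h2 : (∫ y, Q n y ∂(κhat x)) ≤ (∫ y, Q n y ∂(κ x)) + ε₁ :=
        hdom (Q n) hQm ⟨CQ, hCQ⟩ x
      have key : Qhat (n + 1) x ≤ Q (n + 1) x + γ * (ε₁ + c) := by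
        rw [hQhat_rec n x, hQ_rec n x]
        nlinarith
      have hcc : γ * (ε₁ + c) = γ * ε₁ * (1 - γ ^ (n + 1)) / (1 - γ) := by
        rw [hc]; field_simp; ring
      linarith [key, hcc.le]
end

section
/- Let F : ℝᵐ → ℝ be differentiable with gradient bounded by ρ (‖∇F(x)‖ ≤ ρ for all x) and L-Lipschitz smooth (‖∇F(x) − ∇F(y)‖ ≤ L‖x − y‖ for all x, y). Let W : ℝᵏ → ℝ be twice differentiable with ‖∇W(ν)‖ ≤ δ and operator norm of the Hessian ‖∇²W(ν)‖ ≤ B for all ν. Fix ψ₀ ∈ ℝᵐ, u ∈ ℝᵐ with ‖u‖ ≤ ρ, and 0 < β ≤ 1, and define G(ν) = F(ψ₀ − β·W(ν)·u). Then G is ρ²(Lδ² + B)-Lipschitz smooth: ‖∇G(ν₁) − ∇G(ν₂)‖ ≤ ρ²(Lδ² + B)·‖ν₁ − ν₂‖ for all ν₁, ν₂ ∈ ℝᵏ. (Lemma A.3: the outer loss L_RVL is ρ²(Lδ² + B)-Lipschitz smooth with respect to the weighting-network parameters ν.) -/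
/-!
Absorb `β` into the weight, `a = β W`. The chain rule gives
`∇G ν = -⟪∇F (ψ₀ - a ν • u), u⟫ • ∇a ν`. The scalar coefficient is bounded by `ρ²` and, since
`ν ↦ ψ₀ - a ν • u` is `δρ`-Lipschitz, it is `Lδρ²`-Lipschitz; `∇a` is bounded by `δ` and
`B`-Lipschitz. The Leibniz estimate `‖s x - t y‖ ≤ |s - t| ‖x‖ + |t| ‖x - y‖` then gives the
constant `Lδρ² · δ + ρ² · B`, and `β ≤ 1` only shrinks `δ` and `B`.
-/

open InnerProductSpace
open scoped Gradient RealInnerProductSpace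

lemma norm_smul_sub_smul_le_of_le {E : Type*} [SeminormedAddCommGroup E] [NormedSpace ℝ E]
    {s t p a b q : ℝ} {x y : E}
    (hst : |s - t| ≤ p) (hx : ‖x‖ ≤ b) (ht : |t| ≤ a) (hxy : ‖x - y‖ ≤ q) :
    ‖s • x - t • y‖ ≤ p * b + a * q := by
  have hsplit : s • x - t • y = (s - t) • x + t • (x - y) := by
    rw [sub_smul, smul_sub]; abel
  rw [hsplit]
  refine (norm_add_le _ _).trans (add_le_add ?_ ?_) <;> rw [norm_smul, Real.norm_eq_abs]
  · exact mul_le_mul hst hx (norm_nonneg _) ((abs_nonneg _).trans hst)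
  · exact mul_le_mul ht hxy (norm_nonneg _) ((abs_nonneg _).trans ht)

variable {E V : Type*}
  [NormedAddCommGroup E] [InnerProductSpace ℝ E] [CompleteSpace E]
  [NormedAddCommGroup V] [InnerProductSpace ℝ V] [CompleteSpace V]

lemma norm_fderiv_eq_norm_gradient (f : V → ℝ) (x : V) : ‖fderiv ℝ f x‖ = ‖∇ f x‖ := by
  rw [← toDual_gradient, LinearIsometryEquiv.norm_map]

lemma norm_sub_le_of_norm_gradient_le {f : V → ℝ} {C : ℝ} (hf : Differentiable ℝ f)
    (hC : ∀ x, ‖∇ f x‖ ≤ C) (x y : V) : ‖f x - f y‖ ≤ C * ‖x - y‖ :=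
  convex_univ.norm_image_sub_le_of_norm_fderiv_le (fun z _ => hf z)
    (fun z _ => (norm_fderiv_eq_norm_gradient f z).trans_le (hC z)) trivial trivial

lemma HasGradientAt.const_mul {f : V → ℝ} {f' x : V} (hf : HasGradientAt f f' x) (c : ℝ) :
    HasGradientAt (fun x => c * f x) (c • f') x := by
  rw [hasGradientAt_iff_hasFDerivAt] at hf ⊢
  simpa using hf.const_mul c

lemma HasGradientAt.comp_const_sub_smul {F : E → ℝ} {a : V → ℝ} {f ψ₀ u : E} {a' ν : V}
    (hF : HasGradientAt F f (ψ₀ - a ν • u)) (ha : HasGradientAt a a' ν) :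
    HasGradientAt (fun ν => F (ψ₀ - a ν • u)) (-⟪f, u⟫ • a') ν := by
  rw [hasGradientAt_iff_hasFDerivAt] at hF ha ⊢
  refine (hF.comp ν ((ha.smul_const u).const_sub ψ₀)).congr_fderiv ?_
  ext h
  simp [mul_comm]

theorem norm_gradient_comp_const_sub_smul_sub_le {F : E → ℝ} {a : V → ℝ} {ρ L δ B : ℝ}
    (hF : Differentiable ℝ F) (hL : 0 ≤ L) (hFgrad : ∀ x, ‖∇ F x‖ ≤ ρ)
    (hFsmooth : ∀ x y, ‖∇ F x - ∇ F y‖ ≤ L * ‖x - y‖)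
    (ha : Differentiable ℝ a) (ha2 : Differentiable ℝ (∇ a))
    (hagrad : ∀ ν, ‖∇ a ν‖ ≤ δ) (hahess : ∀ ν, ‖fderiv ℝ (∇ a) ν‖ ≤ B)
    (ψ₀ : E) {u : E} (hu : ‖u‖ ≤ ρ) (ν₁ ν₂ : V) :
    ‖∇ (fun ν => F (ψ₀ - a ν • u)) ν₁ - ∇ (fun ν => F (ψ₀ - a ν • u)) ν₂‖ ≤
      ρ ^ 2 * (L * δ ^ 2 + B) * ‖ν₁ - ν₂‖ := by
  have hρ : 0 ≤ ρ := (norm_nonneg u).trans hu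
  have hδ : 0 ≤ δ := (norm_nonneg _).trans (hagrad ν₁)
  have hgrad : ∀ ν, ∇ (fun ν => F (ψ₀ - a ν • u)) ν = -⟪∇ F (ψ₀ - a ν • u), u⟫ • ∇ a ν :=
    fun ν => ((hF _).hasGradientAt.comp_const_sub_smul (ha ν).hasGradientAt).gradient
  have hpath : ‖(ψ₀ - a ν₁ • u) - (ψ₀ - a ν₂ • u)‖ ≤ δ * ‖ν₁ - ν₂‖ * ρ := by
    rw [sub_sub_sub_cancel_left, ← sub_smul, norm_smul, norm_sub_rev]
    exact mul_le_mul (norm_sub_le_of_norm_gradient_le ha hagrad ν₁ ν₂) hu (norm_nonneg _)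
      (by positivity)
  have hcoef_sub : |-⟪∇ F (ψ₀ - a ν₁ • u), u⟫ - -⟪∇ F (ψ₀ - a ν₂ • u), u⟫| ≤
      L * (δ * ‖ν₁ - ν₂‖ * ρ) * ρ := by
    rw [neg_sub_neg, abs_sub_comm, ← inner_sub_left]
    calc _ ≤ ‖∇ F (ψ₀ - a ν₁ • u) - ∇ F (ψ₀ - a ν₂ • u)‖ * ‖u‖ := abs_real_inner_le_norm _ _
      _ ≤ L * (δ * ‖ν₁ - ν₂‖ * ρ) * ρ :=
        mul_le_mul ((hFsmooth _ _).trans (mul_le_mul_of_nonneg_left hpath hL)) hu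
          (norm_nonneg _) (by positivity)
  have hcoef : |-⟪∇ F (ψ₀ - a ν₂ • u), u⟫| ≤ ρ * ρ := by
    rw [abs_neg]
    exact (abs_real_inner_le_norm _ _).trans (mul_le_mul (hFgrad _) hu (norm_nonneg _) hρ)
  have hgrad_sub : ‖∇ a ν₁ - ∇ a ν₂‖ ≤ B * ‖ν₁ - ν₂‖ :=
    convex_univ.norm_image_sub_le_of_norm_fderiv_le (fun ν _ => ha2 ν) (fun ν _ => hahess ν)
      trivial trivial
  rw [hgrad, hgrad]
  refine (norm_smul_sub_smul_le_of_le hcoef_sub (hagrad ν₁) hcoef hgrad_sub).trans_eq ?_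
  ring

/-- Lemma A.3: if `F` has gradient bounded by `ρ` and is `L`-Lipschitz smooth, `W` is twice
differentiable with `‖∇W‖ ≤ δ` and Hessian operator norm bounded by `B`, `‖u‖ ≤ ρ`, and
`0 < β ≤ 1`, then `G(ν) = F(ψ₀ − β·W(ν)·u)` is `ρ²(Lδ² + B)`-Lipschitz smooth. -/
theorem composite_lipschitz_smooth {m k : ℕ}
    (F : EuclideanSpace ℝ (Fin m) → ℝ) (hF : Differentiable ℝ F)
    (ρ L : ℝ) (hL : 0 ≤ L)
    (hFgrad : ∀ x, ‖gradient F x‖ ≤ ρ)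
    (hFsmooth : ∀ x y, ‖gradient F x - gradient F y‖ ≤ L * ‖x - y‖)
    (W : EuclideanSpace ℝ (Fin k) → ℝ)
    (hW : Differentiable ℝ W) (hW2 : Differentiable ℝ (gradient W))
    (δ B : ℝ)
    (hWgrad : ∀ ν, ‖gradient W ν‖ ≤ δ)
    (hWhess : ∀ ν, ‖fderiv ℝ (gradient W) ν‖ ≤ B)
    (ψ₀ u : EuclideanSpace ℝ (Fin m)) (hu : ‖u‖ ≤ ρ)
    (β : ℝ) (hβ0 : 0 < β) (hβ1 : β ≤ 1) :
    ∀ ν₁ ν₂ : EuclideanSpace ℝ (Fin k),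
      ‖gradient (fun ν => F (ψ₀ - (β * W ν) • u)) ν₁ -
          gradient (fun ν => F (ψ₀ - (β * W ν) • u)) ν₂‖ ≤
        ρ ^ 2 * (L * δ ^ 2 + B) * ‖ν₁ - ν₂‖ := by
  intro ν₁ ν₂
  have hδ : 0 ≤ δ := (norm_nonneg _).trans (hWgrad 0)
  have hB : 0 ≤ B := (norm_nonneg _).trans (hWhess 0)
  have hgradβW : ∇ (fun ν => β * W ν) = fun ν => β • ∇ W ν :=
    funext fun ν => ((hW ν).hasGradientAt.const_mul β).gradient
  have hβW_grad : ∀ ν, ‖∇ (fun ν => β * W ν) ν‖ ≤ β * δ := fun ν => by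
    rw [hgradβW, norm_smul, Real.norm_of_nonneg hβ0.le]
    exact mul_le_mul_of_nonneg_left (hWgrad ν) hβ0.le
  have hβW_hess : ∀ ν, ‖fderiv ℝ (∇ fun ν => β * W ν) ν‖ ≤ β * B := fun ν => by
    rw [hgradβW, fderiv_fun_const_smul (hW2 ν), norm_smul, Real.norm_of_nonneg hβ0.le]
    exact mul_le_mul_of_nonneg_left (hWhess ν) hβ0.le
  have hβδ : (β * δ) ^ 2 ≤ δ ^ 2 :=
    pow_le_pow_left₀ (by positivity) (mul_le_of_le_one_left hδ hβ1) 2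
  have hβB : β * B ≤ B := mul_le_of_le_one_left hB hβ1
  calc _ ≤ ρ ^ 2 * (L * (β * δ) ^ 2 + β * B) * ‖ν₁ - ν₂‖ :=
        norm_gradient_comp_const_sub_smul_sub_le hF hL hFgrad hFsmooth (hW.const_mul β)
          (hgradβW ▸ hW2.const_smul β) hβW_grad hβW_hess ψ₀ hu ν₁ ν₂
    _ ≤ ρ ^ 2 * (L * δ ^ 2 + B) * ‖ν₁ - ν₂‖ := by gcongr
end

section
/- Fix K ≥ 1, constants L, L', ρ, c₁, c₂ > 0, and learning rates β₁(t), β₂(t) with c₂/√K ≤ β₁(t), β₂(t) ≤ min{c₁/K, 1/L, 1/L'} for all 0 ≤ t ≤ K−1 (where c₂/√K ≤ min{c₁/K, 1/L, 1/L'}, c₂/√K < 1, c₁/K < 1). Let H : ℝᵐ × ℝᵏ → ℝ be nonnegative and differentiable, such that for each fixed ν the map ψ ↦ H(ψ, ν) is L-Lipschitz smooth, for each fixed ψ the map ν ↦ H(ψ, ν) is L-Lipschitz smooth with ‖∇_ν H(ψ, ν)‖ ≤ ρ everywhere. Let F : ℝᵐ → ℝ be differentiable, define Ψ_t(ν) =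 ψ^t − β₁(t)·∇_ψ H(ψ^t, ν), and let the sequences evolve by ψ^{t+1} = Ψ_t(ν^t) and ν^{t+1} = ν^t − β₂(t)·∇(F ∘ Ψ_t)(ν^t), where additionally ‖∇(F ∘ Ψ_t)(ν^t)‖ ≤ ρ for all t. Then min over 0 ≤ t ≤ K−1 of ‖∇_ψ H(ψ^t, ν^t)‖² ≤ 2·H(ψ⁰, ν⁰)/(c₂·√K) + c₁·ρ²·(2 + L)/(c₂·√K); in particular the inner loss gradients converge at rate O(1/√K). (Proposition 3, convergence of the inner loss L_WSL.) -/
/-!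
Each round is a gradient step in `ψ` followed by a bounded step in `ν`. By the descent lemma for
`L`-smooth functions, the `ψ`-step (with `β₁ L ≤ 1`) lowers `H` by at least `β₁/2 · ‖∇_ψ H‖²`,
while the `ν`-step, whose direction and the gradient `∇_ν H` are both bounded by `ρ`, raises it by
at most `(1 + L/2) ρ² β₂`. Telescoping over `K` rounds and using `H ≥ 0`,
`c₂/√K · Σ ‖∇_ψ H‖² / 2 ≤ H(ψ⁰, ν⁰) + (1 + L/2) ρ² Σ β₂ ≤ H(ψ⁰, ν⁰) + (1 + L/2) ρ² c₁`,
and the smallest term of the left-hand sum is at most its average.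
-/

open scoped RealInnerProductSpace

section Descent

variable {E : Type*} [NormedAddCommGroup E] [InnerProductSpace ℝ E] [CompleteSpace E]
  {f : E → ℝ} {L : ℝ}

lemma hasDerivAt_comp_add_smul (hf : Differentiable ℝ f) (x v : E) (s : ℝ) :
    HasDerivAt (fun s : ℝ => f (x + s • v)) ⟪gradient f (x + s • v), v⟫ s := by
  have hline : HasDerivAt (fun s : ℝ => x + s • v) v s := by
    simpa using ((hasDerivAt_id s).smul_const v).const_add x
  rw [inner_gradient_left]
  exact (hf _).hasFDerivAt.comp_hasDerivAt s hline

lemma le_add_inner_gradient_add_sq (hf : Differentiable ℝ f)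
    (hlip : ∀ a b, ‖gradient f a - gradient f b‖ ≤ L * ‖a - b‖) (x y : E) :
    f y ≤ f x + ⟪gradient f x, y - x⟫ + L / 2 * ‖y - x‖ ^ 2 := by
  set v := y - x
  -- the gap between the quadratic model and `f` along the segment is monotone
  let gap : ℝ → ℝ := fun s =>
    f x + s * ⟪gradient f x, v⟫ + L / 2 * s ^ 2 * ‖v‖ ^ 2 - f (x + s • v)
  let gap' : ℝ → ℝ := fun s =>
    ⟪gradient f x, v⟫ + L * s * ‖v‖ ^ 2 - ⟪gradient f (x + s • v), v⟫
  have hgap : ∀ s, HasDerivAt gap (gap' s) s := by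
    intro s
    have hquad : HasDerivAt (fun s : ℝ => L / 2 * s ^ 2 * ‖v‖ ^ 2) (L * s * ‖v‖ ^ 2) s := by
      refine (((hasDerivAt_pow 2 s).const_mul (L / 2)).mul_const (‖v‖ ^ 2)).congr_deriv ?_
      push_cast
      ring
    have hlin : HasDerivAt (fun s : ℝ => s * ⟪gradient f x, v⟫) ⟪gradient f x, v⟫ s := by
      simpa using (hasDerivAt_id s).mul_const ⟪gradient f x, v⟫
    exact ((hlin.const_add (f x)).add hquad).sub (hasDerivAt_comp_add_smul hf x v s)
  have hgap'_nonneg : ∀ s ∈ interior (Set.Icc (0 : ℝ) 1), 0 ≤ gap' s := by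
    intro s hs
    rw [interior_Icc] at hs
    have hgrad : ‖gradient f (x + s • v) - gradient f x‖ ≤ L * (s * ‖v‖) := by
      simpa [norm_smul, abs_of_nonneg hs.1.le] using hlip (x + s • v) x
    have : ⟪gradient f (x + s • v) - gradient f x, v⟫ ≤ L * (s * ‖v‖) * ‖v‖ :=
      (real_inner_le_norm _ _).trans (mul_le_mul_of_nonneg_right hgrad (norm_nonneg v))
    rw [inner_sub_left] at this
    linarith
  have hmono : MonotoneOn gap (Set.Icc 0 1) :=
    monotoneOn_of_hasDerivWithinAt_nonneg (convex_Icc 0 1)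
      (fun s _ => (hgap s).continuousAt.continuousWithinAt)
      (fun s _ => (hgap s).hasDerivWithinAt) hgap'_nonneg
  have := hmono (by simp) (by simp) zero_le_one
  simp only [gap, v, zero_smul, one_smul, add_zero, add_sub_cancel] at this
  linarith

lemma apply_sub_smul_gradient_le (hf : Differentiable ℝ f)
    (hlip : ∀ a b, ‖gradient f a - gradient f b‖ ≤ L * ‖a - b‖) {β : ℝ} (hβ : 0 ≤ β)
    (hβL : β * L ≤ 1) (x : E) :
    f (x - β • gradient f x) ≤ f x - β / 2 * ‖gradient f x‖ ^ 2 := by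
  have h := le_add_inner_gradient_add_sq hf hlip x (x - β • gradient f x)
  rw [sub_sub_cancel_left, inner_neg_right, real_inner_smul_right, real_inner_self_eq_norm_sq,
    norm_neg, norm_smul, Real.norm_eq_abs, abs_of_nonneg hβ] at h
  nlinarith [mul_nonneg hβ (sq_nonneg ‖gradient f x‖)]

lemma apply_sub_smul_le_of_norm_le (hf : Differentiable ℝ f) (hL : 0 ≤ L)
    (hlip : ∀ a b, ‖gradient f a - gradient f b‖ ≤ L * ‖a - b‖) {β ρ : ℝ} (hβ : 0 ≤ β)
    (hβ₁ : β ≤ 1) {x d : E} (hgrad : ‖gradient f x‖ ≤ ρ) (hd : ‖d‖ ≤ ρ) :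
    f (x - β • d) ≤ f x + (1 + L / 2) * ρ ^ 2 * β := by
  have h := le_add_inner_gradient_add_sq hf hlip x (x - β • d)
  have hρ : 0 ≤ ρ := (norm_nonneg d).trans hd
  have hdisp : ‖x - β • d - x‖ ≤ β * ρ := by
    rw [sub_sub_cancel_left, norm_neg, norm_smul, Real.norm_eq_abs, abs_of_nonneg hβ]
    exact mul_le_mul_of_nonneg_left hd hβ
  have hinner : ⟪gradient f x, x - β • d - x⟫ ≤ ρ * (β * ρ) :=
    (real_inner_le_norm _ _).trans (mul_le_mul hgrad hdisp (norm_nonneg _) hρ)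
  have hsq : ‖x - β • d - x‖ ^ 2 ≤ β * ρ ^ 2 := by
    calc ‖x - β • d - x‖ ^ 2 ≤ (β * ρ) ^ 2 := by gcongr
      _ = β * β * ρ ^ 2 := by ring
      _ ≤ β * ρ ^ 2 := by gcongr; exact mul_le_of_le_one_left hβ hβ₁
  nlinarith [mul_le_mul_of_nonneg_left hsq (by positivity : (0 : ℝ) ≤ L / 2)]

end Descent

variable {E G : Type*} [NormedAddCommGroup E] [InnerProductSpace ℝ E] [CompleteSpace E]
  [NormedAddCommGroup G] [InnerProductSpace ℝ G] [CompleteSpace G]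

lemma alternating_step_le (H : E × G → ℝ) (hH : Differentiable ℝ H) {L ρ : ℝ} (hL : 0 ≤ L)
    (hsmooth₁ : ∀ (y : G) (a b : E),
      ‖gradient (fun a' => H (a', y)) a - gradient (fun a' => H (a', y)) b‖ ≤ L * ‖a - b‖)
    (hsmooth₂ : ∀ (x : E) (a b : G),
      ‖gradient (fun b' => H (x, b')) a - gradient (fun b' => H (x, b')) b‖ ≤ L * ‖a - b‖)
    (hgrad₂ : ∀ (x : E) (y : G), ‖gradient (fun b' => H (x, b')) y‖ ≤ ρ)
    {β₁ β₂ : ℝ} (hβ₁ : 0 ≤ β₁) (hβ₁L : β₁ * L ≤ 1) (hβ₂ : 0 ≤ β₂) (hβ₂_le_one : β₂ ≤ 1)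
    (x : E) (y : G) {d : G} (hd : ‖d‖ ≤ ρ) :
    H (x - β₁ • gradient (fun a' => H (a', y)) x, y - β₂ • d) ≤
      H (x, y) - β₁ / 2 * ‖gradient (fun a' => H (a', y)) x‖ ^ 2 + (1 + L / 2) * ρ ^ 2 * β₂ := by
  set x' := x - β₁ • gradient (fun a' => H (a', y)) x
  have hstep₁ : H (x', y) ≤ H (x, y) - β₁ / 2 * ‖gradient (fun a' => H (a', y)) x‖ ^ 2 :=
    apply_sub_smul_gradient_le (hH.comp (differentiable_id.prodMk (differentiable_const y)))
      (hsmooth₁ y) hβ₁ hβ₁L x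
  have hstep₂ : H (x', y - β₂ • d) ≤ H (x', y) + (1 + L / 2) * ρ ^ 2 * β₂ :=
    apply_sub_smul_le_of_norm_le (hH.comp ((differentiable_const x').prodMk differentiable_id))
      hL (hsmooth₂ x') hβ₂ hβ₂_le_one (hgrad₂ x' y) hd
  linarith

lemma exists_lt_mul_le_of_le_sub_add {K : ℕ} (hK : 0 < K) {a b e : ℕ → ℝ}
    (h : ∀ t < K, a (t + 1) ≤ a t - b t + e t) (haK : 0 ≤ a K) :
    ∃ t < K, K * b t ≤ a 0 + ∑ t ∈ Finset.range K, e t := by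
  have hsum : ∑ t ∈ Finset.range K, b t ≤ a 0 - a K + ∑ t ∈ Finset.range K, e t := by
    rw [← Finset.sum_range_sub' a K, ← Finset.sum_add_distrib]
    exact Finset.sum_le_sum fun t ht => by linarith [h t (Finset.mem_range.mp ht)]
  obtain ⟨t, ht, hle⟩ := Finset.exists_le_of_sum_le (Finset.nonempty_range_iff.mpr hK.ne')
    (f := fun t => K * b t) (g := fun _ => a 0 + ∑ t ∈ Finset.range K, e t) (by
      rw [← Finset.mul_sum, Finset.sum_const, Finset.card_range, nsmul_eq_mul]
      gcongr
      linarith)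
  exact ⟨t, Finset.mem_range.mp ht, hle⟩

theorem inner_loss_convergence_general {m k : ℕ} (K : ℕ) (hK : 1 ≤ K)
    (L L' ρ c₁ c₂ : ℝ)
    (hL : 0 < L) (hc₂ : 0 < c₂)
    (β₁ β₂ : ℕ → ℝ)
    (hβ₁ : ∀ t < K, c₂ / Real.sqrt K ≤ β₁ t ∧
      β₁ t ≤ min (c₁ / K) (min (1 / L) (1 / L')))
    (hβ₂ : ∀ t < K, c₂ / Real.sqrt K ≤ β₂ t ∧
      β₂ t ≤ min (c₁ / K) (min (1 / L) (1 / L')))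
    (hc1K : c₁ / K < 1)
    (H : EuclideanSpace ℝ (Fin m) × EuclideanSpace ℝ (Fin k) → ℝ)
    (hH_nonneg : ∀ p, 0 ≤ H p)
    (hH_diff : Differentiable ℝ H)
    (hH_smooth_ψ : ∀ (q : EuclideanSpace ℝ (Fin k))
      (p₁ p₂ : EuclideanSpace ℝ (Fin m)),
      ‖gradient (fun p' => H (p', q)) p₁ - gradient (fun p' => H (p', q)) p₂‖ ≤
        L * ‖p₁ - p₂‖)
    (hH_smooth_ν : ∀ (p : EuclideanSpace ℝ (Fin m))
      (q₁ q₂ : EuclideanSpace ℝ (Fin k)),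
      ‖gradient (fun q' => H (p, q')) q₁ - gradient (fun q' => H (p, q')) q₂‖ ≤
        L * ‖q₁ - q₂‖)
    (hH_grad_ν : ∀ (p : EuclideanSpace ℝ (Fin m)) (q : EuclideanSpace ℝ (Fin k)),
      ‖gradient (fun q' => H (p, q')) q‖ ≤ ρ)
    (F : EuclideanSpace ℝ (Fin m) → ℝ)
    (ψ : ℕ → EuclideanSpace ℝ (Fin m)) (ν : ℕ → EuclideanSpace ℝ (Fin k))
    (Ψ : ℕ → EuclideanSpace ℝ (Fin k) → EuclideanSpace ℝ (Fin m))
    (hΨ : ∀ t q, Ψ t q = ψ t - β₁ t • gradient (fun p' => H (p', q)) (ψ t))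
    (hψ_rec : ∀ t, ψ (t + 1) = Ψ t (ν t))
    (hν_rec : ∀ t, ν (t + 1) = ν t - β₂ t • gradient (fun q => F (Ψ t q)) (ν t))
    (hG_grad : ∀ t, ‖gradient (fun q => F (Ψ t q)) (ν t)‖ ≤ ρ) :
    ∃ t < K, ‖gradient (fun p' => H (p', ν t)) (ψ t)‖ ^ 2 ≤
      2 * H (ψ 0, ν 0) / (c₂ * Real.sqrt K) +
        c₁ * ρ ^ 2 * (2 + L) / (c₂ * Real.sqrt K) := by
  have hK₀ : (0 : ℝ) < K := by exact_mod_cast hK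
  have hsqrtK : 0 < Real.sqrt K := Real.sqrt_pos.mpr hK₀
  have hc₂K : 0 < c₂ / Real.sqrt K := by positivity
  have hstep : ∀ t < K, H (ψ (t + 1), ν (t + 1)) ≤ H (ψ t, ν t)
      - c₂ / Real.sqrt K / 2 * ‖gradient (fun p' => H (p', ν t)) (ψ t)‖ ^ 2
      + (1 + L / 2) * ρ ^ 2 * β₂ t := by
    intro t ht
    obtain ⟨hβ₁_lo, hβ₁_hi⟩ := hβ₁ t ht
    obtain ⟨hβ₂_lo, hβ₂_hi⟩ := hβ₂ t ht
    have hβ₁L : β₁ t * L ≤ 1 :=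
      (le_div_iff₀ hL).mp (hβ₁_hi.trans ((min_le_right _ _).trans (min_le_left _ _)))
    have hβ₂_le_one : β₂ t ≤ 1 := (hβ₂_hi.trans (min_le_left _ _)).trans hc1K.le
    have hround := alternating_step_le H hH_diff hL.le hH_smooth_ψ hH_smooth_ν hH_grad_ν
      (hc₂K.le.trans hβ₁_lo) hβ₁L (hc₂K.le.trans hβ₂_lo) hβ₂_le_one
      (ψ t) (ν t) (hG_grad t)
    rw [← hΨ, ← hψ_rec, ← hν_rec] at hround
    have : c₂ / Real.sqrt K / 2 * ‖gradient (fun p' => H (p', ν t)) (ψ t)‖ ^ 2 ≤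
        β₁ t / 2 * ‖gradient (fun p' => H (p', ν t)) (ψ t)‖ ^ 2 := by gcongr
    linarith
  have hβ₂_sum : ∑ t ∈ Finset.range K, β₂ t ≤ c₁ := by
    have := Finset.sum_le_card_nsmul (Finset.range K) β₂ (c₁ / K) fun t ht =>
      (hβ₂ t (Finset.mem_range.mp ht)).2.trans (min_le_left _ _)
    rwa [Finset.card_range, nsmul_eq_mul, mul_div_cancel₀ _ hK₀.ne'] at this
  obtain ⟨t, ht, hle⟩ := exists_lt_mul_le_of_le_sub_add hK
    (a := fun t => H (ψ t, ν t)) hstep (hH_nonneg _)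
  refine ⟨t, ht, ?_⟩
  rw [← Finset.mul_sum] at hle
  have hcoef : (K : ℝ) * (c₂ / Real.sqrt K / 2) = c₂ * Real.sqrt K / 2 := by
    field_simp
    rw [Real.sq_sqrt hK₀.le]
  rw [← mul_assoc, hcoef] at hle
  rw [← add_div, le_div_iff₀ (by positivity)]
  nlinarith [mul_le_mul_of_nonneg_left hβ₂_sum (by positivity : 0 ≤ (1 + L / 2) * ρ ^ 2)]

/-- Proposition 3 (convergence of the inner loss `L_WSL`): under the stated learning-rate
conditions, nonnegativity of the inner loss `H`, `L`-Lipschitz smoothness of `H` in each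
variable separately, the gradient bound `‖∇_ν H‖ ≤ ρ`, and the bound
`‖∇(F ∘ Ψ_t)(ν^t)‖ ≤ ρ` along the iterates, the bi-level iterates satisfy
`min_{0 ≤ t ≤ K−1} ‖∇_ψ H(ψ^t, ν^t)‖² ≤ 2·H(ψ⁰, ν⁰)/(c₂√K) + c₁·ρ²·(2 + L)/(c₂√K)`,
i.e. the inner gradients converge at rate `O(1/√K)`. -/
theorem inner_loss_convergence {m k : ℕ} (K : ℕ) (hK : 1 ≤ K)
    (L L' ρ c₁ c₂ : ℝ)
    (hL : 0 < L) (hL' : 0 < L') (hρ : 0 < ρ) (hc₁ : 0 < c₁) (hc₂ : 0 < c₂)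
    (β₁ β₂ : ℕ → ℝ)
    (hβ₁ : ∀ t < K, c₂ / Real.sqrt K ≤ β₁ t ∧
      β₁ t ≤ min (c₁ / K) (min (1 / L) (1 / L')))
    (hβ₂ : ∀ t < K, c₂ / Real.sqrt K ≤ β₂ t ∧
      β₂ t ≤ min (c₁ / K) (min (1 / L) (1 / L')))
    (hc : c₂ / Real.sqrt K ≤ min (c₁ / K) (min (1 / L) (1 / L')))
    (hc2K : c₂ / Real.sqrt K < 1) (hc1K : c₁ / K < 1)
    (H : EuclideanSpace ℝ (Fin m) × EuclideanSpace ℝ (Fin k) → ℝ)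
    (hH_nonneg : ∀ p, 0 ≤ H p)
    (hH_diff : Differentiable ℝ H)
    (hH_smooth_ψ : ∀ (q : EuclideanSpace ℝ (Fin k))
      (p₁ p₂ : EuclideanSpace ℝ (Fin m)),
      ‖gradient (fun p' => H (p', q)) p₁ - gradient (fun p' => H (p', q)) p₂‖ ≤
        L * ‖p₁ - p₂‖)
    (hH_smooth_ν : ∀ (p : EuclideanSpace ℝ (Fin m))
      (q₁ q₂ : EuclideanSpace ℝ (Fin k)),
      ‖gradient (fun q' => H (p, q')) q₁ - gradient (fun q' => H (p, q')) q₂‖ ≤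
        L * ‖q₁ - q₂‖)
    (hH_grad_ν : ∀ (p : EuclideanSpace ℝ (Fin m)) (q : EuclideanSpace ℝ (Fin k)),
      ‖gradient (fun q' => H (p, q')) q‖ ≤ ρ)
    (F : EuclideanSpace ℝ (Fin m) → ℝ)
    (hF_diff : Differentiable ℝ F)
    (ψ : ℕ → EuclideanSpace ℝ (Fin m)) (ν : ℕ → EuclideanSpace ℝ (Fin k))
    (Ψ : ℕ → EuclideanSpace ℝ (Fin k) → EuclideanSpace ℝ (Fin m))
    (hΨ : ∀ t q, Ψ t q = ψ t - β₁ t • gradient (fun p' => H (p', q)) (ψ t))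
    (hψ_rec : ∀ t, ψ (t + 1) = Ψ t (ν t))
    (hν_rec : ∀ t, ν (t + 1) = ν t - β₂ t • gradient (fun q => F (Ψ t q)) (ν t))
    (hG_grad : ∀ t, ‖gradient (fun q => F (Ψ t q)) (ν t)‖ ≤ ρ) :
    ∃ t < K, ‖gradient (fun p' => H (p', ν t)) (ψ t)‖ ^ 2 ≤
      2 * H (ψ 0, ν 0) / (c₂ * Real.sqrt K) +
        c₁ * ρ ^ 2 * (2 + L) / (c₂ * Real.sqrt K) :=
  inner_loss_convergence_general K hK L L' ρ c₁ c₂ hL hc₂ β₁ β₂ hβ₁ hβ₂ hc1K H hH_nonneg hH_diff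
    hH_smooth_ψ hH_smooth_ν hH_grad_ν F ψ ν Ψ hΨ hψ_rec hν_rec hG_grad
end
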